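/- arXiv:1607.04172 — 5 statements merged into one kernel-verified Lean document; each statement's English description precedes it below -/
import Mathlib

section
/- Let a₁, a₂, b₀, b₁, b₂, τ₀ be real with a₁ ≠ 0 and b₀/a₁ not a nonpositive rational making (b₀/a₁)_k vanish for 1 ≤ k ≤ N (i.e., k!·a₁^k·(b₀/a₁)_k ≠ 0 for all 0 ≤ k ≤ N). Define polynomials P_k by P_{-1} = 0, P_0 = 1, and P_{k+1} = (τ₀ − k(k−1)a₂ − k·b₁)·P_k + k·b₂·(N−k+1)·((k−1)a₁ + b₀)·P_{k−1}. If P_{N+1} = 0, then f(z) = Σ_{k=0}^{N} P_k/(k!·a₁^k·(b₀/a₁)_k) · z^k satisfies (a₂z² + a₁z)f'' + (b₂z² + b₁z + b₀)f' − (N·b₂·z + τ₀)f = 0. -/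
/-!
The operator `L = (a₂z² + a₁z) ∂² + (b₂z² + b₁z + b₀) ∂ − (μz + τ₀)` sends `z^k` to
`k((k−1)a₁ + b₀) z^(k−1) + (k(k−1)a₂ + kb₁ − τ₀) z^k + b₂(k − N) z^(k+1)` when `μ = N b₂`, so
`L f = 0` is a three-term recurrence on the coefficients `c_k` of `f`. Writing `c_k = P_k / D_k`
with `D_{k+1} = (k+1)(k a₁ + b₀) D_k` turns it into the recurrence defining `P_k`. At the top
degree, the `z^(N+1)` coefficient vanishes because `b₂(k − N) = 0` at `k = N`, and the `z^N`
coefficient vanishes because `P_{N+1} = 0`.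
-/

open Polynomial

section

variable {R : Type*} [CommRing R]

noncomputable def diffOp (a₁ a₂ b₀ b₁ b₂ μ τ₀ : R) (p : R[X]) : R[X] :=
  (C a₂ * X ^ 2 + C a₁ * X) * derivative (derivative p)
    + (C b₂ * X ^ 2 + C b₁ * X + C b₀) * derivative p - (C μ * X + C τ₀) * p

variable (a₁ a₂ b₀ b₁ b₂ μ τ₀ : R) (p : R[X])

theorem coeff_diffOp_zero :
    (diffOp a₁ a₂ b₀ b₁ b₂ μ τ₀ p).coeff 0 = b₀ * p.coeff 1 - τ₀ * p.coeff 0 := by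
  simp [diffOp, add_mul, pow_two, mul_assoc, coeff_derivative]

theorem coeff_diffOp_succ (m : ℕ) :
    (diffOp a₁ a₂ b₀ b₁ b₂ μ τ₀ p).coeff (m + 1) =
      (m + 2) * ((m + 1) * a₁ + b₀) * p.coeff (m + 2)
        + ((m + 1) * m * a₂ + (m + 1) * b₁ - τ₀) * p.coeff (m + 1)
        + (m * b₂ - μ) * p.coeff m := by
  rcases m with _ | m <;>
  · simp [diffOp, add_mul, pow_two, mul_assoc, coeff_derivative, coeff_X_mul]
    ring

theorem eval_diffOp (z : R) :
    (diffOp a₁ a₂ b₀ b₁ b₂ μ τ₀ p).eval z =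
      (a₂ * z ^ 2 + a₁ * z) * (derivative (derivative p)).eval z
        + (b₂ * z ^ 2 + b₁ * z + b₀) * (derivative p).eval z - (μ * z + τ₀) * p.eval z := by
  simp [diffOp]

end

theorem factorial_mul_pow_mul_ascPochhammer_eval_succ {K : Type*} [Field K] {a : K} (ha : a ≠ 0)
    (b : K) (m : ℕ) :
    ((m + 1).factorial : K) * a ^ (m + 1) * (ascPochhammer K (m + 1)).eval (b / a)
      = (m + 1) * (m * a + b) * ((m.factorial : K) * a ^ m * (ascPochhammer K m).eval (b / a)) := by
  rw [ascPochhammer_succ_right]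
  simp only [Nat.factorial_succ, pow_succ, eval_mul, eval_add, eval_X, eval_natCast,
    Nat.cast_mul, Nat.cast_add, Nat.cast_one]
  field_simp
  ring

section

variable {K : Type*} [Field K] {a₁ a₂ b₀ b₁ b₂ τ₀ : K} {N : ℕ} {D P : ℕ → K}

theorem coeff_sum_range_C_div_mul_X_pow (n : ℕ) :
    (∑ k ∈ Finset.range (N + 1), C (P k / D k) * X ^ k).coeff n = if n ≤ N then P n / D n else 0 := by
  simp [finsetSum_coeff]

-- `D` absorbs the factor `(k + 1) (k a₁ + b₀)`, also at `k = N` where both sides vanish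
theorem mul_coeff_succ_sum_range_C_div_mul_X_pow
    (hD : ∀ k, D (k + 1) = (k + 1) * (k * a₁ + b₀) * D k) (hDne : ∀ k ≤ N, D k ≠ 0)
    (hterm : P (N + 1) = 0) {k : ℕ} (hk : k ≤ N) :
    (k + 1) * (k * a₁ + b₀) * (∑ i ∈ Finset.range (N + 1), C (P i / D i) * X ^ i).coeff (k + 1)
      = P (k + 1) / D k := by
  rw [coeff_sum_range_C_div_mul_X_pow]
  rcases hk.lt_or_eq with hk | rfl
  · have hD' : (k + 1) * (k * a₁ + b₀) * D k ≠ 0 := hD k ▸ hDne (k + 1) hk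
    obtain ⟨⟨hA, hB⟩, hDk⟩ := (mul_ne_zero_iff.mp hD').imp_left mul_ne_zero_iff.mp
    rw [if_pos (show k + 1 ≤ N by omega), hD]
    field_simp
  · simp [hterm]

theorem diffOp_sum_range_eq_zero
    (hD : ∀ k, D (k + 1) = (k + 1) * (k * a₁ + b₀) * D k) (hDne : ∀ k ≤ N, D k ≠ 0)
    (hPrec : ∀ k : ℕ, P (k + 1) =
      (τ₀ - (k : K) * ((k : K) - 1) * a₂ - (k : K) * b₁) * P k +
      (k : K) * b₂ * ((N : K) - (k : K) + 1) * (((k : K) - 1) * a₁ + b₀) *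
        (if k = 0 then 0 else P (k - 1)))
    (hterm : P (N + 1) = 0) :
    diffOp a₁ a₂ b₀ b₁ b₂ (N * b₂) τ₀ (∑ k ∈ Finset.range (N + 1), C (P k / D k) * X ^ k) = 0 := by
  set p := ∑ k ∈ Finset.range (N + 1), C (P k / D k) * X ^ k
  have hc (n) : p.coeff n = if n ≤ N then P n / D n else 0 := coeff_sum_range_C_div_mul_X_pow n
  have hstep {k : ℕ} (hk : k ≤ N) := mul_coeff_succ_sum_range_C_div_mul_X_pow hD hDne hterm hk
  ext m
  rw [coeff_zero]
  rcases m with _ | m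
  · have h0 := hstep (Nat.zero_le N)
    have hP1 : P 1 = τ₀ * P 0 := by simpa using hPrec 0
    simp only [Nat.cast_zero, zero_add, zero_mul, one_mul] at h0
    rw [coeff_diffOp_zero, h0, hP1, hc 0, if_pos (Nat.zero_le N)]
    ring
  · rw [coeff_diffOp_succ]
    rcases Nat.lt_or_ge m N with hm | hm
    · have hc2 : (m + 2) * ((m + 1) * a₁ + b₀) * p.coeff (m + 2) = P (m + 2) / D (m + 1) := by
        have h := hstep hm
        push_cast at h
        linear_combination h
      have hP : P (m + 2) = (τ₀ - (m + 1) * m * a₂ - (m + 1) * b₁) * P (m + 1)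
          + (m + 1) * b₂ * (N - m) * (m * a₁ + b₀) * P m := by
        have h := hPrec (m + 1)
        simp only [Nat.succ_ne_zero, if_false, Nat.add_sub_cancel] at h
        push_cast at h
        linear_combination h
      have hD' : (m + 1) * (m * a₁ + b₀) * D m ≠ 0 := hD m ▸ hDne (m + 1) hm
      obtain ⟨⟨hA, hB⟩, hDm⟩ := (mul_ne_zero_iff.mp hD').imp_left mul_ne_zero_iff.mp
      rw [hc2, hP, hc (m + 1), hc m, if_pos (show m + 1 ≤ N by omega), if_pos hm.le, hD]
      field_simp
      ring
    · have hcm : ((m : K) * b₂ - N * b₂) * p.coeff m = 0 := by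
        rcases hm.eq_or_lt with rfl | hm
        · ring
        · rw [hc, if_neg hm.not_ge, mul_zero]
      rw [hc (m + 2), hc (m + 1), if_neg (by omega), if_neg (by omega), hcm]
      ring

end

theorem stmt_8_general (a₁ a₂ b₀ b₁ b₂ τ₀ : ℝ) (N : ℕ) (ha₁ : a₁ ≠ 0)
    (hnz : ∀ k ≤ N, (Nat.factorial k : ℝ) * a₁ ^ k * (ascPochhammer ℝ k).eval (b₀ / a₁) ≠ 0)
    (P : ℕ → ℝ)
    (hPrec : ∀ k : ℕ, P (k + 1) =
      (τ₀ - (k : ℝ) * ((k : ℝ) - 1) * a₂ - (k : ℝ) * b₁) * P k +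
      (k : ℝ) * b₂ * ((N : ℝ) - (k : ℝ) + 1) * (((k : ℝ) - 1) * a₁ + b₀) *
        (if k = 0 then 0 else P (k - 1)))
    (hterm : P (N + 1) = 0) :
    ∀ z : ℝ,
      (a₂ * z ^ 2 + a₁ * z) *
          deriv (deriv (fun x : ℝ => ∑ k ∈ Finset.range (N + 1),
            P k / ((Nat.factorial k : ℝ) * a₁ ^ k * (ascPochhammer ℝ k).eval (b₀ / a₁)) * x ^ k)) z
        + (b₂ * z ^ 2 + b₁ * z + b₀) *
          deriv (fun x : ℝ => ∑ k ∈ Finset.range (N + 1),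
            P k / ((Nat.factorial k : ℝ) * a₁ ^ k * (ascPochhammer ℝ k).eval (b₀ / a₁)) * x ^ k) z
        - ((N : ℝ) * b₂ * z + τ₀) *
          (∑ k ∈ Finset.range (N + 1),
            P k / ((Nat.factorial k : ℝ) * a₁ ^ k * (ascPochhammer ℝ k).eval (b₀ / a₁)) * z ^ k)
      = 0 := by
  intro z
  set D : ℕ → ℝ := fun k => (Nat.factorial k : ℝ) * a₁ ^ k * (ascPochhammer ℝ k).eval (b₀ / a₁)
  set p : ℝ[X] := ∑ k ∈ Finset.range (N + 1), C (P k / D k) * X ^ k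
  have hp : (fun x : ℝ => ∑ k ∈ Finset.range (N + 1), P k / D k * x ^ k) = fun x => p.eval x := by
    simp [p, eval_finsetSum]
  have hp' : deriv (fun x => p.eval x) = fun x => (derivative p).eval x :=
    funext fun _ => Polynomial.deriv p
  have hL : diffOp a₁ a₂ b₀ b₁ b₂ (N * b₂) τ₀ p = 0 :=
    diffOp_sum_range_eq_zero (factorial_mul_pow_mul_ascPochhammer_eval_succ ha₁ b₀) hnz hPrec hterm
  rw [hp, congrFun hp z, hp', Polynomial.deriv, ← eval_diffOp, hL, eval_zero]

theorem stmt_8 (a₁ a₂ b₀ b₁ b₂ τ₀ : ℝ) (N : ℕ) (ha₁ : a₁ ≠ 0)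
    (hnz : ∀ k ≤ N, (Nat.factorial k : ℝ) * a₁ ^ k * (ascPochhammer ℝ k).eval (b₀ / a₁) ≠ 0)
    (P : ℕ → ℝ) (hP0 : P 0 = 1)
    (hPrec : ∀ k : ℕ, P (k + 1) =
      (τ₀ - (k : ℝ) * ((k : ℝ) - 1) * a₂ - (k : ℝ) * b₁) * P k +
      (k : ℝ) * b₂ * ((N : ℝ) - (k : ℝ) + 1) * (((k : ℝ) - 1) * a₁ + b₀) *
        (if k = 0 then 0 else P (k - 1)))
    (hterm : P (N + 1) = 0) :
    ∀ z : ℝ,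
      (a₂ * z ^ 2 + a₁ * z) *
          deriv (deriv (fun x : ℝ => ∑ k ∈ Finset.range (N + 1),
            P k / ((Nat.factorial k : ℝ) * a₁ ^ k * (ascPochhammer ℝ k).eval (b₀ / a₁)) * x ^ k)) z
        + (b₂ * z ^ 2 + b₁ * z + b₀) *
          deriv (fun x : ℝ => ∑ k ∈ Finset.range (N + 1),
            P k / ((Nat.factorial k : ℝ) * a₁ ^ k * (ascPochhammer ℝ k).eval (b₀ / a₁)) * x ^ k) z
        - ((N : ℝ) * b₂ * z + τ₀) *
          (∑ k ∈ Finset.range (N + 1),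
            P k / ((Nat.factorial k : ℝ) * a₁ ^ k * (ascPochhammer ℝ k).eval (b₀ / a₁)) * z ^ k)
      = 0 :=
  stmt_8_general a₁ a₂ b₀ b₁ b₂ τ₀ N ha₁ hnz P hPrec hterm
end

section
/- For N = 2 and b₀ ≠ 0, a₁ + b₀ ≠ 0, the polynomial f₂(z) = 1 + (τ₀/b₀)z + ((τ₀² − b₁τ₀ + 2b₀b₂)/(2b₀(a₁+b₀)))z² satisfies (a₂z² + a₁z)f'' + (b₂z² + b₁z + b₀)f' − (τ₁z + τ₀)f = 0 if and only if τ₁ = 2b₂ and τ₀³ − (2a₂ + 3b₁)τ₀² + 2(b₁(a₂+b₁) + (a₁+2b₀)b₂)τ₀ − 4b₀(a₂+b₁)b₂ = 0. -/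
/-!
The differential operator sends a quadratic polynomial to a cubic one, so the ODE holds identically
iff the four coefficients of the cubic vanish. The coefficients τ₀/b₀ and
(τ₀² − b₁τ₀ + 2b₀b₂)/(2b₀(a₁ + b₀)) of f₂ are chosen so that the constant coefficient vanishes
and the linear one equals 2b₂ − τ₁; once τ₁ = 2b₂ the cubic coefficient vanishes too and the
quadratic one is −P(τ₀)/(2b₀(a₁ + b₀)), where P is the cubic in the statement.
-/

theorem forall_cubic_eq_zero_iff {p₀ p₁ p₂ p₃ : ℝ} :
    (∀ z : ℝ, p₀ + p₁ * z + p₂ * z ^ 2 + p₃ * z ^ 3 = 0) ↔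
      p₀ = 0 ∧ p₁ = 0 ∧ p₂ = 0 ∧ p₃ = 0 := by
  refine ⟨fun h => ?_, fun ⟨h₀, h₁, h₂, h₃⟩ z => by simp [h₀, h₁, h₂, h₃]⟩
  have e₀ := h 0
  have e₁ := h 1
  have e₂ := h (-1)
  have e₃ := h 2
  norm_num at e₀ e₁ e₂ e₃
  exact ⟨by linarith, by linarith, by linarith, by linarith⟩

theorem deriv_quadratic (c₀ c₁ c₂ : ℝ) :
    deriv (fun x : ℝ => c₀ + c₁ * x + c₂ * x ^ 2) = fun x => c₁ + 2 * c₂ * x := by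
  funext x
  exact ((((hasDerivAt_id x).const_mul c₁).const_add c₀).add
    ((hasDerivAt_pow 2 x).const_mul c₂)).deriv.trans (by ring)

theorem deriv_deriv_quadratic (c₀ c₁ c₂ : ℝ) :
    deriv (deriv (fun x : ℝ => c₀ + c₁ * x + c₂ * x ^ 2)) = fun _ => 2 * c₂ := by
  rw [deriv_quadratic]
  funext x
  exact (((hasDerivAt_id x).const_mul (2 * c₂)).const_add c₁).deriv.trans (by ring)

theorem ode_residual_quadratic (a₁ a₂ b₀ b₁ b₂ τ₀ τ₁ c₀ c₁ c₂ z : ℝ) :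
    (a₂ * z ^ 2 + a₁ * z) * deriv (deriv (fun x : ℝ => c₀ + c₁ * x + c₂ * x ^ 2)) z
        + (b₂ * z ^ 2 + b₁ * z + b₀) * deriv (fun x : ℝ => c₀ + c₁ * x + c₂ * x ^ 2) z
        - (τ₁ * z + τ₀) * (c₀ + c₁ * z + c₂ * z ^ 2) =
      (b₀ * c₁ - τ₀ * c₀) + (2 * (a₁ + b₀) * c₂ + b₁ * c₁ - τ₁ * c₀ - τ₀ * c₁) * z
        + (2 * (a₂ + b₁) * c₂ + b₂ * c₁ - τ₁ * c₁ - τ₀ * c₂) * z ^ 2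
        + (2 * b₂ - τ₁) * c₂ * z ^ 3 := by
  rw [deriv_deriv_quadratic, deriv_quadratic]
  ring

theorem stmt_10 (a₁ a₂ b₀ b₁ b₂ τ₀ τ₁ : ℝ) (hb₀ : b₀ ≠ 0) (hab : a₁ + b₀ ≠ 0) :
    (∀ z : ℝ,
      (a₂ * z ^ 2 + a₁ * z) *
          deriv (deriv (fun x : ℝ => 1 + (τ₀ / b₀) * x +
            ((τ₀ ^ 2 - b₁ * τ₀ + 2 * b₀ * b₂) / (2 * b₀ * (a₁ + b₀))) * x ^ 2)) z
        + (b₂ * z ^ 2 + b₁ * z + b₀) *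
          deriv (fun x : ℝ => 1 + (τ₀ / b₀) * x +
            ((τ₀ ^ 2 - b₁ * τ₀ + 2 * b₀ * b₂) / (2 * b₀ * (a₁ + b₀))) * x ^ 2) z
        - (τ₁ * z + τ₀) * (1 + (τ₀ / b₀) * z +
            ((τ₀ ^ 2 - b₁ * τ₀ + 2 * b₀ * b₂) / (2 * b₀ * (a₁ + b₀))) * z ^ 2) = 0) ↔
    (τ₁ = 2 * b₂ ∧
      τ₀ ^ 3 - (2 * a₂ + 3 * b₁) * τ₀ ^ 2 +
        2 * (b₁ * (a₂ + b₁) + (a₁ + 2 * b₀) * b₂) * τ₀ -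
        4 * b₀ * (a₂ + b₁) * b₂ = 0) := by
  simp_rw [ode_residual_quadratic, forall_cubic_eq_zero_iff]
  set c₁ := τ₀ / b₀
  set c₂ := (τ₀ ^ 2 - b₁ * τ₀ + 2 * b₀ * b₂) / (2 * b₀ * (a₁ + b₀))
  set P := τ₀ ^ 3 - (2 * a₂ + 3 * b₁) * τ₀ ^ 2 + 2 * (b₁ * (a₂ + b₁) + (a₁ + 2 * b₀) * b₂) * τ₀ -
    4 * b₀ * (a₂ + b₁) * b₂
  have hD : 2 * b₀ * (a₁ + b₀) ≠ 0 := by positivity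
  have hc₁ : b₀ * c₁ = τ₀ := mul_div_cancel₀ τ₀ hb₀
  have hc₂ : 2 * b₀ * (a₁ + b₀) * c₂ = τ₀ ^ 2 - b₁ * τ₀ + 2 * b₀ * b₂ := mul_div_cancel₀ _ hD
  have hcoeff₀ : b₀ * c₁ - τ₀ * 1 = 0 := by linear_combination hc₁
  have hcoeff₁ : 2 * (a₁ + b₀) * c₂ + b₁ * c₁ - τ₁ * 1 - τ₀ * c₁ = 2 * b₂ - τ₁ := by
    apply mul_left_cancel₀ hb₀
    linear_combination hc₂ + (b₁ - τ₀) * hc₁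
  have hcoeff₂ : 2 * (a₂ + b₁) * c₂ + b₂ * c₁ - τ₁ * c₁ - τ₀ * c₂ =
      (2 * b₂ - τ₁) * c₁ - P / (2 * b₀ * (a₁ + b₀)) := by
    apply mul_left_cancel₀ hD
    rw [mul_sub _ _ (P / _), mul_div_cancel₀ P hD]
    linear_combination (2 * a₂ + 2 * b₁ - τ₀) * hc₂ - 2 * (a₁ + b₀) * b₂ * hc₁
  simp only [hcoeff₀, hcoeff₁, hcoeff₂, true_and]
  constructor
  · rintro ⟨hτ₁, hP, -⟩
    obtain rfl : τ₁ = 2 * b₂ := by linarith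
    simpa [hD] using hP
  · rintro ⟨rfl, hP⟩
    simp [hP]
end

section
/- The function ψ(z) = sech(z)^{(1+√13)/2} · exp(−((4+√13)/2)·sech(z)²) satisfies −ψ''(z) − (29 + 8√13)·(sinh(z)⁴/cosh(z)⁶)·ψ(z) = −((7+√13)/2)·ψ(z) for all real z. -/
/-!
Write `ψ = sech^a · exp(-b sech²)`. Its logarithmic derivative is `L = tanh · (2b sech² - a)`,
so `ψ'' = (L' + L²) ψ`, and `L' + L²` is a polynomial in `sech²` (using `tanh² = 1 - sech²`).
The two relations `a² = a + 3` and `b = a + 3/2` are exactly what makes this polynomial equal to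
`a² - 4b² sinh⁴/cosh⁶`; the root `a = (1 + √13)/2` of `a² = a + 3` gives the stated constants.
-/

open Real

noncomputable def sechAnsatz (a b x : ℝ) : ℝ :=
  (1 / cosh x) ^ a * exp (-b * (1 / cosh x) ^ 2)

noncomputable def sechAnsatzLogDeriv (a b x : ℝ) : ℝ :=
  sinh x * (2 * b - a * cosh x ^ 2) / cosh x ^ 3

lemma hasDerivAt_one_div_cosh (x : ℝ) :
    HasDerivAt (fun x => 1 / cosh x) (-sinh x / cosh x ^ 2) x :=
  (hasDerivAt_const x (1 : ℝ)).div (hasDerivAt_cosh x) (cosh_pos x).ne' |>.congr_deriv (by ring)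

lemma hasDerivAt_sechAnsatz (a b x : ℝ) :
    HasDerivAt (sechAnsatz a b) (sechAnsatz a b x * sechAnsatzLogDeriv a b x) x := by
  have hc := cosh_pos x
  have hpow : HasDerivAt (fun x => (1 / cosh x) ^ a)
      (-sinh x / cosh x ^ 2 * a * (1 / cosh x) ^ (a - 1)) x :=
    (hasDerivAt_one_div_cosh x).rpow_const (Or.inl (by positivity))
  have hexp : HasDerivAt (fun x => exp (-b * (1 / cosh x) ^ 2))
      (exp (-b * (1 / cosh x) ^ 2) * (-b * (2 * (1 / cosh x) * (-sinh x / cosh x ^ 2)))) x := by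
    simpa using (((hasDerivAt_one_div_cosh x).pow 2).const_mul (-b)).exp
  refine (hpow.mul hexp).congr_deriv ?_
  rw [rpow_sub (by positivity), rpow_one, sechAnsatz, sechAnsatzLogDeriv]
  field_simp
  ring

lemma hasDerivAt_sechAnsatzLogDeriv (a b x : ℝ) :
    HasDerivAt (sechAnsatzLogDeriv a b)
      ((6 * b - (a + 4 * b) * cosh x ^ 2) / cosh x ^ 4) x := by
  have hc := cosh_pos x
  have hnum : HasDerivAt (fun x => sinh x * (2 * b - a * cosh x ^ 2))
      (cosh x * (2 * b - a * cosh x ^ 2) + sinh x * -(a * (2 * cosh x * sinh x))) x :=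
    (hasDerivAt_sinh x).mul ((((hasDerivAt_cosh x).pow 2).const_mul a).const_sub (2 * b))
      |>.congr_deriv (by simp)
  have hden : HasDerivAt (fun x => cosh x ^ 3) (3 * cosh x ^ 2 * sinh x) x :=
    (hasDerivAt_cosh x).pow 3 |>.congr_deriv (by norm_num)
  refine (hnum.div hden (by positivity)).congr_deriv ?_
  field_simp
  rw [sinh_sq]
  ring

lemma deriv_deriv_sechAnsatz (a b x : ℝ) :
    deriv (deriv (sechAnsatz a b)) x =
      sechAnsatz a b x * ((6 * b - (a + 4 * b) * cosh x ^ 2) / cosh x ^ 4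
        + sechAnsatzLogDeriv a b x ^ 2) := by
  have hderiv : deriv (sechAnsatz a b) = fun x => sechAnsatz a b x * sechAnsatzLogDeriv a b x :=
    funext fun x => (hasDerivAt_sechAnsatz a b x).deriv
  rw [hderiv]
  exact ((hasDerivAt_sechAnsatz a b x).mul (hasDerivAt_sechAnsatzLogDeriv a b x)).deriv.trans
    (by ring)

lemma sechAnsatz_riccati {a b : ℝ} (ha : a ^ 2 = a + 3) (hb : b = a + 3 / 2) (x : ℝ) :
    (6 * b - (a + 4 * b) * cosh x ^ 2) / cosh x ^ 4 + sechAnsatzLogDeriv a b x ^ 2 =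
      a ^ 2 - 4 * b ^ 2 * (sinh x ^ 4 / cosh x ^ 6) := by
  have hc := cosh_pos x
  have hsinh4 : sinh x ^ 4 = (cosh x ^ 2 - 1) ^ 2 := by rw [← sinh_sq]; ring
  subst hb
  rw [sechAnsatzLogDeriv, hsinh4]
  field_simp
  rw [sinh_sq]
  linear_combination -4 * cosh x ^ 4 * ha

lemma sechAnsatz_schrodinger {a b : ℝ} (ha : a ^ 2 = a + 3) (hb : b = a + 3 / 2) (x : ℝ) :
    -deriv (deriv (sechAnsatz a b)) x - 4 * b ^ 2 * (sinh x ^ 4 / cosh x ^ 6) * sechAnsatz a b x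
      = -a ^ 2 * sechAnsatz a b x := by
  rw [deriv_deriv_sechAnsatz, sechAnsatz_riccati ha hb]
  ring

theorem stmt_11 :
    ∀ z : ℝ,
      -(deriv (deriv (fun x : ℝ =>
          (1 / Real.cosh x) ^ ((1 + Real.sqrt 13) / 2) *
            Real.exp (-((4 + Real.sqrt 13) / 2) * (1 / Real.cosh x) ^ 2))) z)
        - (29 + 8 * Real.sqrt 13) * (Real.sinh z ^ 4 / Real.cosh z ^ 6) *
          ((1 / Real.cosh z) ^ ((1 + Real.sqrt 13) / 2) *
            Real.exp (-((4 + Real.sqrt 13) / 2) * (1 / Real.cosh z) ^ 2))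
      = -((7 + Real.sqrt 13) / 2) *
          ((1 / Real.cosh z) ^ ((1 + Real.sqrt 13) / 2) *
            Real.exp (-((4 + Real.sqrt 13) / 2) * (1 / Real.cosh z) ^ 2)) := by
  intro z
  have hsqrt : sqrt 13 ^ 2 = 13 := sq_sqrt (by norm_num)
  have ha : ((1 + sqrt 13) / 2) ^ 2 = (1 + sqrt 13) / 2 + 3 := by linear_combination hsqrt / 4
  have key := sechAnsatz_schrodinger ha (b := (4 + sqrt 13) / 2) (by ring) z
  have hv : 4 * ((4 + sqrt 13) / 2) ^ 2 = 29 + 8 * sqrt 13 := by linear_combination hsqrt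
  have hE : ((1 + sqrt 13) / 2) ^ 2 = (7 + sqrt 13) / 2 := by linear_combination hsqrt / 4
  rwa [hv, hE] at key
end

section
/- The function ψ(z) = tanh(z) · sech(z)^{(3+√61)/2} · exp(−((8+√61)/2)·sech(z)²) satisfies −ψ''(z) − (125 + 16√61)·(sinh(z)⁴/cosh(z)⁶)·ψ(z) = −((35+3√61)/2)·ψ(z) for all real z. -/
/-! Writing `t = tanh z`, `s = sech z`, one has `t' = s²`, `s' = -t s` and `s² = 1 - t²`, so the
family `ψ_{a,b} = t · s^a · exp (-b s²)` is closed under differentiation up to polynomial factors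
in `t`: `ψ'' = s^a exp (-b s²) · t · P_{a,b}(t)`. The Schrödinger equation with potential
`-v t⁴ s²` and energy `ε` becomes a polynomial identity in `u = s²`, whose coefficients of
`u³, u², u, 1` force `v = 4b²`, `b = a + 5/2`, `a² = 3a + 13` and `ε = -a²`. The positive root
`a = (3 + √61)/2` gives the stated values. -/

open Real

namespace Real

theorem sech_sq_eq (x : ℝ) : (1 / cosh x) ^ 2 = 1 - tanh x ^ 2 := by
  have := cosh_sq_sub_sinh_sq x
  rw [tanh_eq_sinh_div_cosh]
  field_simp [(cosh_pos x).ne']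
  linarith

theorem sinh_pow_four_div_cosh_pow_six (x : ℝ) :
    sinh x ^ 4 / cosh x ^ 6 = tanh x ^ 4 * (1 - tanh x ^ 2) := by
  rw [← sech_sq_eq, tanh_eq_sinh_div_cosh]
  field_simp

theorem hasDerivAt_tanh (x : ℝ) : HasDerivAt tanh (1 - tanh x ^ 2) x := by
  have h := (hasDerivAt_sinh x).div (hasDerivAt_cosh x) (cosh_pos x).ne'
  rw [← sech_sq_eq, show tanh = fun x => sinh x / cosh x from funext tanh_eq_sinh_div_cosh]
  refine h.congr_deriv ?_
  field_simp
  linear_combination cosh_sq_sub_sinh_sq x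

theorem hasDerivAt_sech (x : ℝ) :
    HasDerivAt (fun x => 1 / cosh x) (-(tanh x * (1 / cosh x))) x := by
  have h := (hasDerivAt_cosh x).inv (cosh_pos x).ne'
  simp only [one_div] at h ⊢
  refine h.congr_deriv ?_
  rw [tanh_eq_sinh_div_cosh]
  field_simp

end Real

noncomputable def sechGaussian (a b x : ℝ) : ℝ :=
  (1 / cosh x) ^ a * exp (-b * (1 / cosh x) ^ 2)

noncomputable def tanhSechGaussian (a b x : ℝ) : ℝ :=
  tanh x * (1 / cosh x) ^ a * exp (-b * (1 / cosh x) ^ 2)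

section

variable (a b : ℝ)

theorem tanhSechGaussian_eq (x : ℝ) : tanhSechGaussian a b x = tanh x * sechGaussian a b x :=
  mul_assoc _ _ _

theorem hasDerivAt_sechGaussian (x : ℝ) :
    HasDerivAt (sechGaussian a b)
      (tanh x * (2 * b * (1 - tanh x ^ 2) - a) * sechGaussian a b x) x := by
  have hc : cosh x ≠ 0 := (cosh_pos x).ne'
  have hsech : 1 / cosh x ≠ 0 := by simp [hc]
  have hs := hasDerivAt_sech x
  have hs2 : HasDerivAt (fun y => (1 / cosh y) ^ 2) _ x := hs.pow 2
  have hE : HasDerivAt (fun y => exp (-b * (1 / cosh y) ^ 2)) _ x := (hs2.const_mul (-b)).exp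
  have h : HasDerivAt (sechGaussian a b) _ x := (hs.rpow_const (p := a) (Or.inl hsech)).mul hE
  refine h.congr_deriv ?_
  rw [sechGaussian, rpow_sub_one hsech, ← sech_sq_eq]
  norm_num
  field_simp
  ring

theorem hasDerivAt_tanhSechGaussian (x : ℝ) :
    HasDerivAt (tanhSechGaussian a b)
      (sechGaussian a b x * (1 - tanh x ^ 2 + tanh x ^ 2 * (2 * b * (1 - tanh x ^ 2) - a))) x := by
  have h := (hasDerivAt_tanh x).mul (hasDerivAt_sechGaussian a b x)
  rw [show tanhSechGaussian a b = fun x => tanh x * sechGaussian a b x from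
    funext (tanhSechGaussian_eq a b)]
  refine h.congr_deriv ?_
  ring

theorem deriv_deriv_tanhSechGaussian (x : ℝ) :
    deriv (deriv (tanhSechGaussian a b)) x = sechGaussian a b x * tanh x *
      ((2 * b * (1 - tanh x ^ 2) - a) *
          (1 - tanh x ^ 2 + tanh x ^ 2 * (2 * b * (1 - tanh x ^ 2) - a)) +
        (1 - tanh x ^ 2) * (-2 + 2 * (2 * b * (1 - tanh x ^ 2) - a) - 4 * b * tanh x ^ 2)) := by
  have ht : HasDerivAt (fun y => tanh y ^ 2) _ x := (hasDerivAt_tanh x).pow 2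
  have hR : HasDerivAt (fun y => 1 - tanh y ^ 2 + tanh y ^ 2 * (2 * b * (1 - tanh y ^ 2) - a))
      _ x := (ht.const_sub 1).add (ht.mul (((ht.const_sub 1).const_mul (2 * b)).sub_const a))
  have h : HasDerivAt (fun y => sechGaussian a b y *
      (1 - tanh y ^ 2 + tanh y ^ 2 * (2 * b * (1 - tanh y ^ 2) - a))) _ x :=
    (hasDerivAt_sechGaussian a b x).mul hR
  rw [funext fun y => (hasDerivAt_tanhSechGaussian a b y).deriv, h.deriv]
  ring

theorem tanhSechGaussian_schrodinger (hb : b = a + 5 / 2) (ha : a ^ 2 = 3 * a + 13) (z : ℝ) :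
    -(deriv (deriv (tanhSechGaussian a b)) z)
        - 4 * b ^ 2 * (sinh z ^ 4 / cosh z ^ 6) * tanhSechGaussian a b z
      = -a ^ 2 * tanhSechGaussian a b z := by
  rw [deriv_deriv_tanhSechGaussian, sinh_pow_four_div_cosh_pow_six, tanhSechGaussian_eq, hb]
  linear_combination (sechGaussian a (a + 5 / 2) z * tanh z * (1 - tanh z ^ 2)) * ha

end

theorem stmt_12 :
    ∀ z : ℝ,
      -(deriv (deriv (fun x : ℝ =>
          Real.tanh x * (1 / Real.cosh x) ^ ((3 + Real.sqrt 61) / 2) *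
            Real.exp (-((8 + Real.sqrt 61) / 2) * (1 / Real.cosh x) ^ 2))) z)
        - (125 + 16 * Real.sqrt 61) * (Real.sinh z ^ 4 / Real.cosh z ^ 6) *
          (Real.tanh z * (1 / Real.cosh z) ^ ((3 + Real.sqrt 61) / 2) *
            Real.exp (-((8 + Real.sqrt 61) / 2) * (1 / Real.cosh z) ^ 2))
      = -((35 + 3 * Real.sqrt 61) / 2) *
          (Real.tanh z * (1 / Real.cosh z) ^ ((3 + Real.sqrt 61) / 2) *
            Real.exp (-((8 + Real.sqrt 61) / 2) * (1 / Real.cosh z) ^ 2)) := by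
  intro z
  have hr : √61 ^ 2 = 61 := sq_sqrt (by norm_num)
  have hv : (125 : ℝ) + 16 * √61 = 4 * ((8 + √61) / 2) ^ 2 := by linear_combination -hr
  have hε : (35 + 3 * √61) / 2 = ((3 + √61) / 2) ^ 2 := by linear_combination -hr / 4
  rw [hv, hε]
  exact tanhSechGaussian_schrodinger _ _ (by ring) (by linear_combination hr / 4) z
end

section
/- The system of equations 3 + 2√(−ε) − √v = 0 and ε − (1 + 2√v)√(−ε) − 2√v + v = 0 in the unknowns ε < 0, v > 0 has the unique solution v = 29 + 8√13, ε = −(7+√13)/2. -/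
/-!
With `a = √(-ε)` and `b = √v`, the first equation says `b = 3 + 2a`; substituted into the second
it leaves `a ^ 2 = a + 3`, whose nonnegative root is `a = (1 + √13) / 2`, so `b = 4 + √13`.
-/

open Real

lemma sq_eq_self_add_iff {a c : ℝ} (ha : 0 ≤ a) (hc : 0 < c) :
    a ^ 2 = a + c ↔ a = (1 + √(1 + 4 * c)) / 2 := by
  have hdiscrim : discrim 1 (-1) (-c) = √(1 + 4 * c) * √(1 + 4 * c) := by
    rw [mul_self_sqrt (by linarith), discrim]
    ring
  have hroot : 1 < √(1 + 4 * c) := lt_sqrt_of_sq_lt (by linarith)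
  rw [show a ^ 2 = a + c ↔ 1 * (a * a) + -1 * a + -c = 0 by constructor <;> intro h <;> linarith,
    quadratic_eq_zero_iff one_ne_zero hdiscrim]
  constructor
  · rintro (h | h)
    · rw [h]; ring
    · rw [h] at ha; linarith
  · intro h
    left
    rw [h]; ring

lemma double_well_system_iff {a b : ℝ} (ha : 0 ≤ a) :
    (3 + 2 * a - b = 0 ∧ -a ^ 2 - (1 + 2 * b) * a - 2 * b + b ^ 2 = 0) ↔
      (b = 4 + √13 ∧ a = (1 + √13) / 2) := by
  have hquad : a ^ 2 = a + 3 ↔ a = (1 + √13) / 2 := by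
    rw [sq_eq_self_add_iff ha (by norm_num)]
    norm_num
  constructor
  · rintro ⟨h1, h2⟩
    obtain rfl : b = 3 + 2 * a := by linarith
    have ha' := hquad.mp (by linear_combination -h2)
    exact ⟨by rw [ha']; ring, ha'⟩
  · rintro ⟨rfl, ha'⟩
    rw [show 4 + √13 = 3 + 2 * a by rw [ha']; ring]
    exact ⟨by ring, by linear_combination -hquad.mpr ha'⟩

theorem stmt_13 (ε v : ℝ) (hε : ε < 0) (hv : 0 < v) :
    (3 + 2 * Real.sqrt (-ε) - Real.sqrt v = 0 ∧
      ε - (1 + 2 * Real.sqrt v) * Real.sqrt (-ε) - 2 * Real.sqrt v + v = 0) ↔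
    (v = 29 + 8 * Real.sqrt 13 ∧ ε = -((7 + Real.sqrt 13) / 2)) := by
  have h13 : √13 ^ 2 = 13 := sq_sqrt (by norm_num)
  have hv_iff : v = 29 + 8 * √13 ↔ √v = 4 + √13 := by
    rw [sqrt_eq_iff_eq_sq hv.le (by positivity), show (4 + √13) ^ 2 = 29 + 8 * √13 by
      linear_combination h13]
  have hε_iff : ε = -((7 + √13) / 2) ↔ √(-ε) = (1 + √13) / 2 := by
    rw [sqrt_eq_iff_eq_sq (by linarith) (by positivity),
      show ((1 + √13) / 2) ^ 2 = (7 + √13) / 2 by linear_combination h13 / 4, neg_eq_iff_eq_neg]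
  have hsys := double_well_system_iff (a := √(-ε)) (b := √v) (sqrt_nonneg _)
  rw [sq_sqrt (by linarith), sq_sqrt hv.le, neg_neg] at hsys
  rwa [hv_iff, hε_iff]
end
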